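/- arXiv:2307.12022 — 2 statements merged into one kernel-verified Lean document; each statement's English description precedes it below -/
import Mathlib

section
/- Consider the two-stage decision problem on finite spaces. Assume the overlap condition (V4): there is ε > 0 with μ₁(a₁|h₁) ≥ ε and μ₂(a₂|h₂) ≥ ε for all h₁, a₁, h₂, a₂. Let ê_n : ℋ₂ → ℝ^q and ŷ_n : ℋ₂ × 𝒜₂ → ℝ^q be sequences of functions with sup_n sup_{h₂,a₂} ‖ŷ_n(h₂,a₂)‖₂ < ∞, set Q̂_{n,2}(h₂,a₂) = ⟨ê_n(h₂), ŷ_n(h₂,a₂)⟩, and let Q̂_{n,1} : ℋ₁ × 𝒜₁ → ℝ be a uniformly bounded sequence of functions. Define greedy DTRs π̂_n = (π̂_{n,1}, π̂_{n,2}) by π̂_{n,2}(h₂) ∈ argmax_{a₂} Q̂_{n,2}(h₂,a₂) and π̂_{n,1}(h₁) ∈ argmax_{a₁} Q̂_{n,1}(h₁,a₁). Assume as n → ∞: (V1) ∑_{h₂} P_{H₂}(h₂) ‖ê_n(h₂) − e*(h₂)‖₂² → 0; (V2) ∑_{h₂,a₂} P_{H₂,A₂}(h₂,a₂) ‖ŷ_n(h₂,a₂)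 − y*(h₂,a₂)‖₂² → 0; (V3) ∑_{h₁,a₁} P_{H₁,A₁}(h₁,a₁) (Q̂_{n,1}(h₁,a₁) − ∑_{h₂} p₂(h₂|h₁,a₁) max_{a₂} Q̂_{n,2}(h₂,a₂))² → 0. Then V(π̂_n) → max_π V(π), where the maximum is over all deterministic DTRs π = (π₁, π₂). -/
open Filter

lemma luq_cs_sum {ι : Type*} [Fintype ι] (w x : ι → ℝ) (hw : ∀ i, 0 ≤ w i)
    (hw1 : ∑ i, w i = 1) :
    ∑ i, w i * x i ≤ Real.sqrt (∑ i, w i * x i ^ 2) := by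
  apply Real.le_sqrt_of_sq_le
  calc (∑ i, w i * x i) ^ 2
      = (∑ i, Real.sqrt (w i) * (Real.sqrt (w i) * x i)) ^ 2 := by
        congr 1
        exact Finset.sum_congr rfl fun i _ => by
          rw [← mul_assoc, Real.mul_self_sqrt (hw i)]
    _ ≤ (∑ i, Real.sqrt (w i) ^ 2) * ∑ i, (Real.sqrt (w i) * x i) ^ 2 :=
        Finset.sum_mul_sq_le_sq_mul_sq _ _ _
    _ = (∑ i, w i) * ∑ i, w i * x i ^ 2 := by
        congr 1
        · exact Finset.sum_congr rfl fun i _ => Real.sq_sqrt (hw i)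
        · exact Finset.sum_congr rfl fun i _ => by rw [mul_pow, Real.sq_sqrt (hw i)]
    _ = ∑ i, w i * x i ^ 2 := by rw [hw1, one_mul]

lemma luq_sqrt_tendsto {f : ℕ → ℝ} (h : Tendsto f atTop (nhds 0)) :
    Tendsto (fun n => Real.sqrt (f n)) atTop (nhds 0) := by
  have := (Real.continuous_sqrt.tendsto 0).comp h
  simpa [Function.comp_def] using this

lemma luq_div_trick {ε x y : ℝ} (hε : 0 < ε) (h : ε * x ≤ y) : x ≤ 1 / ε * y := by
  have h2 := mul_le_mul_of_nonneg_left h (inv_nonneg.mpr hε.le)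
  rwa [← mul_assoc, inv_mul_cancel₀ hε.ne', one_mul, inv_eq_one_div] at h2

/-- Value consistency of Latent Utility Q-Learning in the two-stage finite decision
problem (the paper's Theorem 2): under the overlap condition (V4) and the L²(behaviour)
consistency conditions (V1)–(V3) for the estimated preference weights, outcome
regressions and first-stage Q-functions, the value of the greedy estimated DTR
converges to the optimal value over all deterministic DTRs. -/
theorem luq_learning_value_consistency
    {H1 A1 H2 A2 : Type*}
    [Fintype H1] [Nonempty H1] [DecidableEq H1]
    [Fintype A1] [Nonempty A1]
    [Fintype H2] [Nonempty H2] [DecidableEq H2]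
    [Fintype A2] [Nonempty A2]
    {q : ℕ}
    -- initial distribution, behaviour policies and transition kernel
    (p1 : H1 → ℝ) (hp1 : (∀ h1, 0 ≤ p1 h1) ∧ ∑ h1, p1 h1 = 1)
    (μ1 : H1 → A1 → ℝ) (hμ1 : ∀ h1, (∀ a1, 0 ≤ μ1 h1 a1) ∧ ∑ a1, μ1 h1 a1 = 1)
    (μ2 : H2 → A2 → ℝ) (hμ2 : ∀ h2, (∀ a2, 0 ≤ μ2 h2 a2) ∧ ∑ a2, μ2 h2 a2 = 1)
    (p2 : H1 → A1 → H2 → ℝ)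
    (hp2 : ∀ h1 a1, (∀ h2, 0 ≤ p2 h1 a1 h2) ∧ ∑ h2, p2 h1 a1 h2 = 1)
    -- (V4) overlap
    (ε : ℝ) (hε : 0 < ε)
    (hover1 : ∀ h1 a1, ε ≤ μ1 h1 a1) (hover2 : ∀ h2 a2, ε ≤ μ2 h2 a2)
    -- true second-stage structure
    (estar : H2 → EuclideanSpace ℝ (Fin q))
    (hestar : ∀ h2, (∀ i, 0 ≤ estar h2 i) ∧ ∑ i, estar h2 i = 1)
    (C : ℝ) (ystar : H2 → A2 → EuclideanSpace ℝ (Fin q))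
    (hystar : ∀ h2 a2 i, ystar h2 a2 i ∈ Set.Icc (0 : ℝ) C)
    -- true Q-functions and value function
    (Q2 : H2 → A2 → ℝ) (hQ2 : ∀ h2 a2, Q2 h2 a2 = inner ℝ (estar h2) (ystar h2 a2))
    (Q1 : H1 → A1 → ℝ)
    (hQ1 : ∀ h1 a1, Q1 h1 a1 =
      ∑ h2, p2 h1 a1 h2 * Finset.univ.sup' Finset.univ_nonempty (fun a2 => Q2 h2 a2))
    (V : (H1 → A1) → (H2 → A2) → ℝ)
    (hV : ∀ π1 π2, V π1 π2 =
      ∑ h1, p1 h1 * ∑ h2, p2 h1 (π1 h1) h2 * Q2 h2 (π2 h2))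
    -- behaviour marginals
    (PH1A1 : H1 → A1 → ℝ) (hPH1A1 : ∀ h1 a1, PH1A1 h1 a1 = p1 h1 * μ1 h1 a1)
    (PH2 : H2 → ℝ)
    (hPH2 : ∀ h2, PH2 h2 = ∑ h1, ∑ a1, PH1A1 h1 a1 * p2 h1 a1 h2)
    (PH2A2 : H2 → A2 → ℝ) (hPH2A2 : ∀ h2 a2, PH2A2 h2 a2 = PH2 h2 * μ2 h2 a2)
    -- estimated quantities
    (ehat : ℕ → H2 → EuclideanSpace ℝ (Fin q))
    (yhat : ℕ → H2 → A2 → EuclideanSpace ℝ (Fin q))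
    (Cy : ℝ) (hyhatbdd : ∀ n h2 a2, ‖yhat n h2 a2‖ ≤ Cy)
    (Q2hat : ℕ → H2 → A2 → ℝ)
    (hQ2hat : ∀ n h2 a2, Q2hat n h2 a2 = inner ℝ (ehat n h2) (yhat n h2 a2))
    (Q1hat : ℕ → H1 → A1 → ℝ)
    (CQ : ℝ) (hQ1hatbdd : ∀ n h1 a1, |Q1hat n h1 a1| ≤ CQ)
    -- greedy estimated DTRs
    (π1hat : ℕ → H1 → A1) (π2hat : ℕ → H2 → A2)
    (hπ2hat : ∀ n h2 a2, Q2hat n h2 a2 ≤ Q2hat n h2 (π2hat n h2))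
    (hπ1hat : ∀ n h1 a1, Q1hat n h1 a1 ≤ Q1hat n h1 (π1hat n h1))
    -- (V1), (V2), (V3)
    (hV1 : Tendsto (fun n => ∑ h2, PH2 h2 * ‖ehat n h2 - estar h2‖ ^ 2)
      atTop (nhds 0))
    (hV2 : Tendsto (fun n => ∑ h2, ∑ a2, PH2A2 h2 a2 * ‖yhat n h2 a2 - ystar h2 a2‖ ^ 2)
      atTop (nhds 0))
    (hV3 : Tendsto (fun n => ∑ h1, ∑ a1, PH1A1 h1 a1 *
        (Q1hat n h1 a1 - ∑ h2, p2 h1 a1 h2 *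
          Finset.univ.sup' Finset.univ_nonempty (fun a2 => Q2hat n h2 a2)) ^ 2)
      atTop (nhds 0)) :
    Tendsto (fun n => V (π1hat n) (π2hat n)) atTop
      (nhds (Finset.univ.sup' Finset.univ_nonempty
        (fun π : (H1 → A1) × (H2 → A2) => V π.1 π.2))) := by
    classical
  obtain ⟨hp1nn, hp1sum⟩ := hp1
  have hμ1nn : ∀ h1 a1, 0 ≤ μ1 h1 a1 := fun h1 => (hμ1 h1).1
  have hμ1sum : ∀ h1, ∑ a1, μ1 h1 a1 = 1 := fun h1 => (hμ1 h1).2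
  have hμ2nn : ∀ h2 a2, 0 ≤ μ2 h2 a2 := fun h2 => (hμ2 h2).1
  have hμ2sum : ∀ h2, ∑ a2, μ2 h2 a2 = 1 := fun h2 => (hμ2 h2).2
  have hp2nn : ∀ h1 a1 h2, 0 ≤ p2 h1 a1 h2 := fun h1 a1 => (hp2 h1 a1).1
  have hp2sum : ∀ h1 a1, ∑ h2, p2 h1 a1 h2 = 1 := fun h1 a1 => (hp2 h1 a1).2
  have hPA1nn : ∀ h1 a1, 0 ≤ PH1A1 h1 a1 := fun h1 a1 => by
    rw [hPH1A1]; exact mul_nonneg (hp1nn h1) (hμ1nn h1 a1)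
  have hPA1sum : ∑ h1, ∑ a1, PH1A1 h1 a1 = 1 := by
    calc ∑ h1, ∑ a1, PH1A1 h1 a1 = ∑ h1, p1 h1 * ∑ a1, μ1 h1 a1 := by
          refine Finset.sum_congr rfl fun h1 _ => ?_
          rw [Finset.mul_sum]
          exact Finset.sum_congr rfl fun a1 _ => hPH1A1 h1 a1
      _ = ∑ h1, p1 h1 := Finset.sum_congr rfl fun h1 _ => by rw [hμ1sum h1, mul_one]
      _ = 1 := hp1sum
  have hPH2nn : ∀ h2, 0 ≤ PH2 h2 := fun h2 => by
    rw [hPH2]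
    exact Finset.sum_nonneg fun h1 _ => Finset.sum_nonneg fun a1 _ =>
      mul_nonneg (hPA1nn h1 a1) (hp2nn h1 a1 h2)
  have hPH2sum : ∑ h2, PH2 h2 = 1 := by
    calc ∑ h2, PH2 h2 = ∑ h2, ∑ h1, ∑ a1, PH1A1 h1 a1 * p2 h1 a1 h2 :=
          Finset.sum_congr rfl fun h2 _ => hPH2 h2
      _ = ∑ h1, ∑ h2, ∑ a1, PH1A1 h1 a1 * p2 h1 a1 h2 := Finset.sum_comm
      _ = ∑ h1, ∑ a1, ∑ h2, PH1A1 h1 a1 * p2 h1 a1 h2 :=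
          Finset.sum_congr rfl fun h1 _ => Finset.sum_comm
      _ = ∑ h1, ∑ a1, PH1A1 h1 a1 * ∑ h2, p2 h1 a1 h2 := by
          refine Finset.sum_congr rfl fun h1 _ => Finset.sum_congr rfl fun a1 _ => ?_
          rw [Finset.mul_sum]
      _ = ∑ h1, ∑ a1, PH1A1 h1 a1 :=
          Finset.sum_congr rfl fun h1 _ => Finset.sum_congr rfl fun a1 _ => by
            rw [hp2sum h1 a1, mul_one]
      _ = 1 := hPA1sum
  have hPA2nn : ∀ h2 a2, 0 ≤ PH2A2 h2 a2 := fun h2 a2 => by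
    rw [hPH2A2]; exact mul_nonneg (hPH2nn h2) (hμ2nn h2 a2)
  have hPH2A2marg : ∀ h2, ∑ a2, PH2A2 h2 a2 = PH2 h2 := fun h2 => by
    calc ∑ a2, PH2A2 h2 a2 = PH2 h2 * ∑ a2, μ2 h2 a2 := by
          rw [Finset.mul_sum]
          exact Finset.sum_congr rfl fun a2 _ => hPH2A2 h2 a2
      _ = PH2 h2 := by rw [hμ2sum h2, mul_one]
  have hPA2sum : ∑ h2, ∑ a2, PH2A2 h2 a2 = 1 := by
    calc ∑ h2, ∑ a2, PH2A2 h2 a2 = ∑ h2, PH2 h2 :=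
          Finset.sum_congr rfl fun h2 _ => hPH2A2marg h2
      _ = 1 := hPH2sum
  -- overlap consequences
  have hp1le : ∀ h1 a1, p1 h1 ≤ 1 / ε * PH1A1 h1 a1 := by
    intro h1 a1
    apply luq_div_trick hε
    rw [hPH1A1]
    calc ε * p1 h1 ≤ μ1 h1 a1 * p1 h1 :=
          mul_le_mul_of_nonneg_right (hover1 h1 a1) (hp1nn h1)
      _ = p1 h1 * μ1 h1 a1 := mul_comm _ _
  have hkernel : ∀ (σ : H1 → A1) h2,
      ∑ h1, p1 h1 * p2 h1 (σ h1) h2 ≤ 1 / ε * PH2 h2 := by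
    intro σ h2
    apply luq_div_trick hε
    rw [hPH2 h2, Finset.mul_sum]
    apply Finset.sum_le_sum; intro h1 _
    calc ε * (p1 h1 * p2 h1 (σ h1) h2) ≤ μ1 h1 (σ h1) * (p1 h1 * p2 h1 (σ h1) h2) :=
          mul_le_mul_of_nonneg_right (hover1 h1 (σ h1))
            (mul_nonneg (hp1nn h1) (hp2nn h1 _ h2))
      _ = PH1A1 h1 (σ h1) * p2 h1 (σ h1) h2 := by rw [hPH1A1]; ring
      _ ≤ ∑ a1, PH1A1 h1 a1 * p2 h1 a1 h2 :=
          Finset.single_le_sum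
            (fun a1 _ => mul_nonneg (hPA1nn h1 a1) (hp2nn h1 a1 h2)) (Finset.mem_univ _)
  have hPH2le : ∀ h2 a2, PH2 h2 ≤ 1 / ε * PH2A2 h2 a2 := by
    intro h2 a2
    apply luq_div_trick hε
    rw [hPH2A2]
    calc ε * PH2 h2 ≤ μ2 h2 a2 * PH2 h2 :=
          mul_le_mul_of_nonneg_right (hover2 h2 a2) (hPH2nn h2)
      _ = PH2 h2 * μ2 h2 a2 := mul_comm _ _
  -- norm bounds
  set Cst : ℝ := Real.sqrt (q * C ^ 2) with hCstdef
  have hCst0 : 0 ≤ Cst := Real.sqrt_nonneg _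
  have hCstb : ∀ h2 a2, ‖ystar h2 a2‖ ≤ Cst := by
    intro h2 a2
    rw [hCstdef, EuclideanSpace.norm_eq]
    apply Real.sqrt_le_sqrt
    calc ∑ i, ‖ystar h2 a2 i‖ ^ 2 = ∑ i, (ystar h2 a2 i) ^ 2 := by
          exact Finset.sum_congr rfl fun i _ => by rw [Real.norm_eq_abs, sq_abs]
      _ ≤ ∑ _i : Fin q, C ^ 2 := Finset.sum_le_sum fun i _ =>
          pow_le_pow_left₀ (hystar h2 a2 i).1 (hystar h2 a2 i).2 2
      _ = q * C ^ 2 := by simp [Finset.sum_const, Finset.card_univ]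
  have hestar1 : ∀ h2, ‖estar h2‖ ≤ 1 := by
    intro h2
    rw [EuclideanSpace.norm_eq]
    have hb : ∑ i, ‖estar h2 i‖ ^ 2 ≤ 1 := by
      calc ∑ i, ‖estar h2 i‖ ^ 2 = ∑ i, (estar h2 i) ^ 2 :=
            Finset.sum_congr rfl fun i _ => by rw [Real.norm_eq_abs, sq_abs]
        _ ≤ (∑ i, estar h2 i) ^ 2 :=
            Finset.sum_sq_le_sq_sum_of_nonneg fun i _ => (hestar h2).1 i
        _ = 1 := by rw [(hestar h2).2, one_pow]
    calc Real.sqrt (∑ i, ‖estar h2 i‖ ^ 2) ≤ Real.sqrt 1 := Real.sqrt_le_sqrt hb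
      _ = 1 := Real.sqrt_one
  have hCy0 : 0 ≤ Cy :=
    le_trans (norm_nonneg _) (hyhatbdd 0 (Classical.arbitrary H2) (Classical.arbitrary A2))
  set K2 : ℝ := 2 * Cst + Cy with hK2def
  have hK2 : 0 ≤ K2 := by rw [hK2def]; linarith
  have hQ2diff : ∀ n h2 a2, |Q2 h2 a2 - Q2hat n h2 a2| ≤
      K2 * ‖ehat n h2 - estar h2‖ + ‖yhat n h2 a2 - ystar h2 a2‖ := by
    intro n h2 a2
    rw [hQ2 h2 a2, hQ2hat n h2 a2, hK2def]
    have hsplit : (inner ℝ (estar h2) (ystar h2 a2) : ℝ) - inner ℝ (ehat n h2) (yhat n h2 a2)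
        = (inner ℝ (estar h2 - ehat n h2) (ystar h2 a2) : ℝ)
          + inner ℝ (ehat n h2) (ystar h2 a2 - yhat n h2 a2) := by
      rw [inner_sub_left, inner_sub_right]; ring
    rw [hsplit]
    have habs := abs_add_le (inner ℝ (estar h2 - ehat n h2) (ystar h2 a2) : ℝ)
      (inner ℝ (ehat n h2) (ystar h2 a2 - yhat n h2 a2))
    have h2a := abs_real_inner_le_norm (estar h2 - ehat n h2) (ystar h2 a2)
    have h2b := abs_real_inner_le_norm (ehat n h2) (ystar h2 a2 - yhat n h2 a2)
    rw [norm_sub_rev] at h2a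
    rw [norm_sub_rev (ystar h2 a2)] at h2b
    have hehat : ‖ehat n h2‖ ≤ 1 + ‖ehat n h2 - estar h2‖ := by
      have ht : ‖ehat n h2‖ ≤ ‖estar h2‖ + ‖ehat n h2 - estar h2‖ := by
        have := norm_add_le (estar h2) (ehat n h2 - estar h2)
        simpa using this
      linarith [hestar1 h2]
    have hdybdd : ‖yhat n h2 a2 - ystar h2 a2‖ ≤ Cy + Cst :=
      le_trans (norm_sub_le _ _) (add_le_add (hyhatbdd n h2 a2) (hCstb h2 a2))
    have f1 : ‖ehat n h2 - estar h2‖ * ‖ystar h2 a2‖ ≤ ‖ehat n h2 - estar h2‖ * Cst :=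
      mul_le_mul_of_nonneg_left (hCstb h2 a2) (norm_nonneg _)
    have f2 : ‖ehat n h2‖ * ‖yhat n h2 a2 - ystar h2 a2‖
        ≤ (1 + ‖ehat n h2 - estar h2‖) * ‖yhat n h2 a2 - ystar h2 a2‖ :=
      mul_le_mul_of_nonneg_right hehat (norm_nonneg _)
    have f3 : ‖ehat n h2 - estar h2‖ * ‖yhat n h2 a2 - ystar h2 a2‖
        ≤ ‖ehat n h2 - estar h2‖ * (Cy + Cst) :=
      mul_le_mul_of_nonneg_left hdybdd (norm_nonneg _)
    nlinarith [habs, h2a, h2b, f1, f2, f3]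
  -- second-stage estimated value function and error quantities
  set D2 : ℕ → H2 → ℝ := fun n h2 => ∑ a2, |Q2 h2 a2 - Q2hat n h2 a2| with hD2def
  set T : ℕ → H1 → A1 → ℝ := fun n h1 a1 => ∑ h2, p2 h1 a1 h2 *
    Finset.univ.sup' Finset.univ_nonempty (fun a2 => Q2hat n h2 a2) with hTdef
  set E1 : ℕ → H1 → A1 → ℝ := fun n h1 a1 => |Q1hat n h1 a1 - T n h1 a1| with hE1def
  have hD2nn : ∀ n h2, 0 ≤ D2 n h2 := fun n h2 => by
    simp only [hD2def]; exact Finset.sum_nonneg fun a2 _ => abs_nonneg (Q2 h2 a2 - Q2hat n h2 a2)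
  have hE1nn : ∀ n h1 a1, 0 ≤ E1 n h1 a1 := fun n h1 a1 => by
    simp only [hE1def]; exact abs_nonneg _
  have habsle : ∀ n h2 a2, |Q2 h2 a2 - Q2hat n h2 a2| ≤ D2 n h2 := fun n h2 a2 => by
    simp only [hD2def]
    exact Finset.single_le_sum (f := fun a2 => |Q2 h2 a2 - Q2hat n h2 a2|)
      (fun a2 _ => abs_nonneg _) (Finset.mem_univ a2)
  have hMhat : ∀ n h2, Finset.univ.sup' Finset.univ_nonempty (fun a2 => Q2hat n h2 a2)
      = Q2hat n h2 (π2hat n h2) := fun n h2 =>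
    le_antisymm (Finset.sup'_le _ _ fun a2 _ => hπ2hat n h2 a2)
      (Finset.le_sup' _ (Finset.mem_univ _))
  -- per-h1 one-step bound
  have hstep : ∀ n (π1 : H1 → A1) (π2 : H2 → A2) (h1 : H1),
      ∑ h2, p2 h1 (π1 h1) h2 * Q2 h2 (π2 h2)
        ≤ (∑ h2, p2 h1 (π1hat n h1) h2 * Q2 h2 (π2hat n h2))
          + (∑ h2, p2 h1 (π1 h1) h2 * D2 n h2)
          + (∑ h2, p2 h1 (π1hat n h1) h2 * D2 n h2)
          + E1 n h1 (π1 h1) + E1 n h1 (π1hat n h1) := by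
    intro n π1 π2 h1
    have step1 : ∑ h2, p2 h1 (π1 h1) h2 * Q2 h2 (π2 h2)
        ≤ T n h1 (π1 h1) + ∑ h2, p2 h1 (π1 h1) h2 * D2 n h2 := by
      simp only [hTdef]
      rw [← Finset.sum_add_distrib]
      apply Finset.sum_le_sum; intro h2 _
      rw [← mul_add]
      apply mul_le_mul_of_nonneg_left ?_ (hp2nn h1 (π1 h1) h2)
      have hA : Q2 h2 (π2 h2) - Q2hat n h2 (π2 h2) ≤ D2 n h2 :=
        le_trans (le_abs_self _) (habsle n h2 (π2 h2))
      have hB : Q2hat n h2 (π2 h2)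
          ≤ Finset.univ.sup' Finset.univ_nonempty (fun a2 => Q2hat n h2 a2) :=
        Finset.le_sup' _ (Finset.mem_univ _)
      linarith
    have step2 : T n h1 (π1 h1) ≤ Q1hat n h1 (π1 h1) + E1 n h1 (π1 h1) := by
      have habs : T n h1 (π1 h1) - Q1hat n h1 (π1 h1) ≤ E1 n h1 (π1 h1) := by
        simp only [hE1def]
        rw [abs_sub_comm]
        exact le_abs_self _
      linarith
    have step2' : Q1hat n h1 (π1 h1) ≤ Q1hat n h1 (π1hat n h1) := hπ1hat n h1 (π1 h1)
    have step3 : Q1hat n h1 (π1hat n h1) ≤ T n h1 (π1hat n h1) + E1 n h1 (π1hat n h1) := by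
      have habs : Q1hat n h1 (π1hat n h1) - T n h1 (π1hat n h1) ≤ E1 n h1 (π1hat n h1) := by
        simp only [hE1def]
        exact le_abs_self _
      linarith
    have step4 : T n h1 (π1hat n h1)
        ≤ (∑ h2, p2 h1 (π1hat n h1) h2 * Q2 h2 (π2hat n h2))
          + ∑ h2, p2 h1 (π1hat n h1) h2 * D2 n h2 := by
      simp only [hTdef]
      rw [← Finset.sum_add_distrib]
      apply Finset.sum_le_sum; intro h2 _
      rw [hMhat n h2, ← mul_add]
      apply mul_le_mul_of_nonneg_left ?_ (hp2nn h1 (π1hat n h1) h2)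
      have hA : Q2hat n h2 (π2hat n h2) - Q2 h2 (π2hat n h2) ≤ D2 n h2 := by
        calc Q2hat n h2 (π2hat n h2) - Q2 h2 (π2hat n h2)
            ≤ |Q2hat n h2 (π2hat n h2) - Q2 h2 (π2hat n h2)| := le_abs_self _
          _ = |Q2 h2 (π2hat n h2) - Q2hat n h2 (π2hat n h2)| := abs_sub_comm _ _
          _ ≤ D2 n h2 := habsle n h2 (π2hat n h2)
      linarith
    linarith
  -- summed bound
  have hsum : ∀ n (π1 : H1 → A1) (π2 : H2 → A2),
      V π1 π2 ≤ V (π1hat n) (π2hat n)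
        + (∑ h1, p1 h1 * ∑ h2, p2 h1 (π1 h1) h2 * D2 n h2)
        + (∑ h1, p1 h1 * ∑ h2, p2 h1 (π1hat n h1) h2 * D2 n h2)
        + (∑ h1, p1 h1 * E1 n h1 (π1 h1))
        + (∑ h1, p1 h1 * E1 n h1 (π1hat n h1)) := by
    intro n π1 π2
    rw [hV π1 π2, hV (π1hat n) (π2hat n)]
    calc ∑ h1, p1 h1 * ∑ h2, p2 h1 (π1 h1) h2 * Q2 h2 (π2 h2)
        ≤ ∑ h1, p1 h1 * ((∑ h2, p2 h1 (π1hat n h1) h2 * Q2 h2 (π2hat n h2))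
            + (∑ h2, p2 h1 (π1 h1) h2 * D2 n h2)
            + (∑ h2, p2 h1 (π1hat n h1) h2 * D2 n h2)
            + E1 n h1 (π1 h1) + E1 n h1 (π1hat n h1)) :=
          Finset.sum_le_sum fun h1 _ =>
            mul_le_mul_of_nonneg_left (hstep n π1 π2 h1) (hp1nn h1)
      _ = _ := by
          simp only [mul_add, Finset.sum_add_distrib]
  -- tail bounds
  have hDtail : ∀ n (σ : H1 → A1),
      ∑ h1, p1 h1 * ∑ h2, p2 h1 (σ h1) h2 * D2 n h2
        ≤ 1 / ε * ∑ h2, PH2 h2 * D2 n h2 := by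
    intro n σ
    have hswap : ∑ h1, p1 h1 * ∑ h2, p2 h1 (σ h1) h2 * D2 n h2
        = ∑ h2, (∑ h1, p1 h1 * p2 h1 (σ h1) h2) * D2 n h2 := by
      simp_rw [Finset.mul_sum, Finset.sum_mul, ← mul_assoc]
      exact Finset.sum_comm
    rw [hswap, Finset.mul_sum]
    apply Finset.sum_le_sum; intro h2 _
    calc (∑ h1, p1 h1 * p2 h1 (σ h1) h2) * D2 n h2
        ≤ (1 / ε * PH2 h2) * D2 n h2 :=
          mul_le_mul_of_nonneg_right (hkernel σ h2) (hD2nn n h2)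
      _ = 1 / ε * (PH2 h2 * D2 n h2) := by ring
  have hEtail : ∀ n (σ : H1 → A1),
      ∑ h1, p1 h1 * E1 n h1 (σ h1)
        ≤ 1 / ε * ∑ h1, ∑ a1, PH1A1 h1 a1 * E1 n h1 a1 := by
    intro n σ
    calc ∑ h1, p1 h1 * E1 n h1 (σ h1)
        ≤ ∑ h1, 1 / ε * ∑ a1, PH1A1 h1 a1 * E1 n h1 a1 := by
          apply Finset.sum_le_sum; intro h1 _
          calc p1 h1 * E1 n h1 (σ h1)
              ≤ (1 / ε * PH1A1 h1 (σ h1)) * E1 n h1 (σ h1) :=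
                mul_le_mul_of_nonneg_right (hp1le h1 (σ h1)) (hE1nn n h1 (σ h1))
            _ = 1 / ε * (PH1A1 h1 (σ h1) * E1 n h1 (σ h1)) := by ring
            _ ≤ 1 / ε * ∑ a1, PH1A1 h1 a1 * E1 n h1 a1 := by
                apply mul_le_mul_of_nonneg_left ?_ (by positivity)
                exact Finset.single_le_sum
                  (fun a1 _ => mul_nonneg (hPA1nn h1 a1) (hE1nn n h1 a1))
                  (Finset.mem_univ _)
      _ = 1 / ε * ∑ h1, ∑ a1, PH1A1 h1 a1 * E1 n h1 a1 := by rw [← Finset.mul_sum]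
  -- Cauchy-Schwarz bounds
  have hS1 : ∀ n, ∑ h1, ∑ a1, PH1A1 h1 a1 * E1 n h1 a1
      ≤ Real.sqrt (∑ h1, ∑ a1, PH1A1 h1 a1 *
          (Q1hat n h1 a1 - ∑ h2, p2 h1 a1 h2 *
            Finset.univ.sup' Finset.univ_nonempty (fun a2 => Q2hat n h2 a2)) ^ 2) := by
    intro n
    have hcs := luq_cs_sum (ι := H1 × A1) (fun z => PH1A1 z.1 z.2)
      (fun z => E1 n z.1 z.2) (fun z => hPA1nn z.1 z.2)
      (by rw [Fintype.sum_prod_type]; exact hPA1sum)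
    refine le_trans (le_of_eq ?_) (hcs.trans (le_of_eq ?_))
    · exact (Fintype.sum_prod_type
        (f := fun z : H1 × A1 => PH1A1 z.1 z.2 * E1 n z.1 z.2)).symm
    · congr 1
      rw [Fintype.sum_prod_type]
      refine Finset.sum_congr rfl fun h1 _ => Finset.sum_congr rfl fun a1 _ => ?_
      simp only [hE1def, hTdef, sq_abs]
  have hS2 : ∀ n, ∑ h2, PH2 h2 * D2 n h2
      ≤ 1 / ε * (K2 * Real.sqrt (∑ h2, PH2 h2 * ‖ehat n h2 - estar h2‖ ^ 2)
          + Real.sqrt (∑ h2, ∑ a2, PH2A2 h2 a2 * ‖yhat n h2 a2 - ystar h2 a2‖ ^ 2)) := by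
    intro n
    have step1 : ∑ h2, PH2 h2 * D2 n h2
        ≤ 1 / ε * ∑ h2, ∑ a2, PH2A2 h2 a2 * |Q2 h2 a2 - Q2hat n h2 a2| := by
      calc ∑ h2, PH2 h2 * D2 n h2
          = ∑ h2, ∑ a2, PH2 h2 * |Q2 h2 a2 - Q2hat n h2 a2| := by
            refine Finset.sum_congr rfl fun h2 _ => ?_
            simp only [hD2def]
            rw [Finset.mul_sum]
        _ ≤ ∑ h2, ∑ a2, 1 / ε * (PH2A2 h2 a2 * |Q2 h2 a2 - Q2hat n h2 a2|) := by
            refine Finset.sum_le_sum fun h2 _ => Finset.sum_le_sum fun a2 _ => ?_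
            have hm := mul_le_mul_of_nonneg_right (hPH2le h2 a2)
              (abs_nonneg (Q2 h2 a2 - Q2hat n h2 a2))
            exact hm.trans (le_of_eq (by ring))
        _ = 1 / ε * ∑ h2, ∑ a2, PH2A2 h2 a2 * |Q2 h2 a2 - Q2hat n h2 a2| := by
            simp_rw [← Finset.mul_sum]
    have hde : ∑ h2, ∑ a2, PH2A2 h2 a2 * ‖ehat n h2 - estar h2‖
        ≤ Real.sqrt (∑ h2, PH2 h2 * ‖ehat n h2 - estar h2‖ ^ 2) := by
      have hcs := luq_cs_sum (ι := H2 × A2) (fun z => PH2A2 z.1 z.2)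
        (fun z => ‖ehat n z.1 - estar z.1‖) (fun z => hPA2nn z.1 z.2)
        (by rw [Fintype.sum_prod_type]; exact hPA2sum)
      refine le_trans (le_of_eq ?_) (hcs.trans (le_of_eq ?_))
      · exact (Fintype.sum_prod_type
          (f := fun z : H2 × A2 => PH2A2 z.1 z.2 * ‖ehat n z.1 - estar z.1‖)).symm
      · congr 1
        rw [Fintype.sum_prod_type]
        refine Finset.sum_congr rfl fun h2 _ => ?_
        have hgoal : ∑ a2, PH2A2 h2 a2 * ‖ehat n h2 - estar h2‖ ^ 2
            = PH2 h2 * ‖ehat n h2 - estar h2‖ ^ 2 := by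
          rw [← Finset.sum_mul, hPH2A2marg h2]
        exact hgoal
    have hdy : ∑ h2, ∑ a2, PH2A2 h2 a2 * ‖yhat n h2 a2 - ystar h2 a2‖
        ≤ Real.sqrt (∑ h2, ∑ a2, PH2A2 h2 a2 * ‖yhat n h2 a2 - ystar h2 a2‖ ^ 2) := by
      have hcs := luq_cs_sum (ι := H2 × A2) (fun z => PH2A2 z.1 z.2)
        (fun z => ‖yhat n z.1 z.2 - ystar z.1 z.2‖) (fun z => hPA2nn z.1 z.2)
        (by rw [Fintype.sum_prod_type]; exact hPA2sum)
      refine le_trans (le_of_eq ?_) (hcs.trans (le_of_eq ?_))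
      · exact (Fintype.sum_prod_type
          (f := fun z : H2 × A2 => PH2A2 z.1 z.2 * ‖yhat n z.1 z.2 - ystar z.1 z.2‖)).symm
      · congr 1
        exact Fintype.sum_prod_type
          (f := fun z : H2 × A2 => PH2A2 z.1 z.2 * ‖yhat n z.1 z.2 - ystar z.1 z.2‖ ^ 2)
    have step2 : ∑ h2, ∑ a2, PH2A2 h2 a2 * |Q2 h2 a2 - Q2hat n h2 a2|
        ≤ K2 * (∑ h2, ∑ a2, PH2A2 h2 a2 * ‖ehat n h2 - estar h2‖)
          + ∑ h2, ∑ a2, PH2A2 h2 a2 * ‖yhat n h2 a2 - ystar h2 a2‖ := by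
      calc ∑ h2, ∑ a2, PH2A2 h2 a2 * |Q2 h2 a2 - Q2hat n h2 a2|
          ≤ ∑ h2, ∑ a2, PH2A2 h2 a2 *
              (K2 * ‖ehat n h2 - estar h2‖ + ‖yhat n h2 a2 - ystar h2 a2‖) :=
            Finset.sum_le_sum fun h2 _ => Finset.sum_le_sum fun a2 _ =>
              mul_le_mul_of_nonneg_left (hQ2diff n h2 a2) (hPA2nn h2 a2)
        _ = ∑ h2, ∑ a2, (K2 * (PH2A2 h2 a2 * ‖ehat n h2 - estar h2‖)
              + PH2A2 h2 a2 * ‖yhat n h2 a2 - ystar h2 a2‖) :=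
            Finset.sum_congr rfl fun h2 _ => Finset.sum_congr rfl fun a2 _ => by ring
        _ = _ := by simp_rw [Finset.sum_add_distrib, ← Finset.mul_sum]
    refine step1.trans (mul_le_mul_of_nonneg_left ?_ (by positivity))
    exact step2.trans (add_le_add (mul_le_mul_of_nonneg_left hde hK2) hdy)
  -- the error bound sequence
  set L : ℕ → ℝ := fun n => 2 * (1 / ε) *
      (1 / ε * (K2 * Real.sqrt (∑ h2, PH2 h2 * ‖ehat n h2 - estar h2‖ ^ 2)
        + Real.sqrt (∑ h2, ∑ a2, PH2A2 h2 a2 * ‖yhat n h2 a2 - ystar h2 a2‖ ^ 2))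
       + Real.sqrt (∑ h1, ∑ a1, PH1A1 h1 a1 *
          (Q1hat n h1 a1 - ∑ h2, p2 h1 a1 h2 *
            Finset.univ.sup' Finset.univ_nonempty (fun a2 => Q2hat n h2 a2)) ^ 2))
    with hLdef
  have hbound : ∀ n (π1 : H1 → A1) (π2 : H2 → A2),
      V π1 π2 ≤ V (π1hat n) (π2hat n) + L n := by
    intro n π1 π2
    have h0 := hsum n π1 π2
    have hεinv : (0 : ℝ) ≤ 1 / ε := by positivity
    have hb := (hDtail n π1).trans (mul_le_mul_of_nonneg_left (hS2 n) hεinv)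
    have hc := (hDtail n (π1hat n)).trans (mul_le_mul_of_nonneg_left (hS2 n) hεinv)
    have hd := (hEtail n π1).trans (mul_le_mul_of_nonneg_left (hS1 n) hεinv)
    have he := (hEtail n (π1hat n)).trans (mul_le_mul_of_nonneg_left (hS1 n) hεinv)
    simp only [hLdef]
    linarith
  set Vstar : ℝ := Finset.univ.sup' Finset.univ_nonempty
      (fun π : (H1 → A1) × (H2 → A2) => V π.1 π.2) with hVstardef
  have hub : ∀ n, V (π1hat n) (π2hat n) ≤ Vstar := fun n =>
    Finset.le_sup' (f := fun π : (H1 → A1) × (H2 → A2) => V π.1 π.2)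
      (Finset.mem_univ (π1hat n, π2hat n))
  have hlb : ∀ n, Vstar - L n ≤ V (π1hat n) (π2hat n) := by
    intro n
    rw [sub_le_iff_le_add, hVstardef]
    apply Finset.sup'_le
    intro π _
    exact hbound n π.1 π.2
  have hL0 : Tendsto L atTop (nhds 0) := by
    have h1 := luq_sqrt_tendsto hV1
    have h2 := luq_sqrt_tendsto hV2
    have h3 := luq_sqrt_tendsto hV3
    have hmain := ((((h1.const_mul K2).add h2).const_mul (1 / ε)).add h3).const_mul
      (2 * (1 / ε))
    rw [hLdef]
    simpa using hmain
  refine tendsto_of_tendsto_of_tendsto_of_le_of_le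
    (g := fun n => Vstar - L n) (h := fun _ => Vstar) ?_ tendsto_const_nhds hlb hub
  have hc : Tendsto (fun _ : ℕ => Vstar) atTop (nhds Vstar) := tendsto_const_nhds
  simpa using hc.sub hL0
end

section
/- Let (Ω, ℱ, P) be a probability space, 𝒜 a finite nonempty set, ℋ a measurable space, H : Ω → ℋ and A : Ω → 𝒜 measurable, and ε > 0. Suppose that for every a ∈ 𝒜, the conditional probability P(A = a | σ(H)) ≥ ε almost surely. Then for every measurable g : ℋ × 𝒜 → ℝ with E[g(H,a)²] < ∞ for each a ∈ 𝒜, one has E[max_{a ∈ 𝒜} g(H,a)²] ≤ (1/ε) E[g(H,A)²]. -/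
open MeasureTheory

/-- Overlap (positivity) inequality: if every action `a` in a finite nonempty set has
conditional probability at least `ε` given the history `H`, then the second moment of
the pointwise maximum over actions is controlled by `1/ε` times the second moment
evaluated at the observed action:
`E[max_a g(H,a)²] ≤ (1/ε) E[g(H,A)²]`. -/
theorem overlap_max_second_moment {Ω : Type*} {mΩ : MeasurableSpace Ω}
    (P : Measure Ω) [IsProbabilityMeasure P]
    {𝒜 : Type*} [Fintype 𝒜] [Nonempty 𝒜] [MeasurableSpace 𝒜] [MeasurableSingletonClass 𝒜]
    {ℋ : Type*} [MeasurableSpace ℋ]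
    (H : Ω → ℋ) (A : Ω → 𝒜) (hH : Measurable H) (hA : Measurable A)
    (ε : ℝ) (hε : 0 < ε)
    (hoverlap : ∀ a : 𝒜, ∀ᵐ ω ∂P,
      ε ≤ MeasureTheory.condExp (MeasurableSpace.comap H inferInstance) P
            (Set.indicator {ω' | A ω' = a} fun _ => (1 : ℝ)) ω) :
    ∀ g : ℋ → 𝒜 → ℝ, Measurable (fun p : ℋ × 𝒜 => g p.1 p.2) →
      (∀ a : 𝒜, Integrable (fun ω => (g (H ω) a) ^ 2) P) →
      ∫ ω, (Finset.univ.sup' Finset.univ_nonempty fun a => (g (H ω) a) ^ 2) ∂P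
        ≤ (1 / ε) * ∫ ω, (g (H ω) (A ω)) ^ 2 ∂P := by
  intro g hg hgint
  have hm_le : MeasurableSpace.comap H inferInstance ≤ mΩ := hH.comap_le
  -- f a is m-strongly measurable
  have hga_meas : ∀ a : 𝒜, Measurable (fun h : ℋ => (g h a) ^ 2) := fun a =>
    ((hg.comp (measurable_id.prodMk measurable_const)).pow_const 2)
  have hHm : Measurable[MeasurableSpace.comap H inferInstance] H := fun s hs => ⟨s, hs, rfl⟩
  have hfm : ∀ a : 𝒜, StronglyMeasurable[MeasurableSpace.comap H inferInstance] (fun ω => (g (H ω) a) ^ 2) := fun a =>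
    ((hga_meas a).comp hHm).stronglyMeasurable
  set ind : 𝒜 → Ω → ℝ := fun a => Set.indicator {ω' | A ω' = a} (fun _ => (1 : ℝ)) with hind_def
  have hAset : ∀ a : 𝒜, MeasurableSet[mΩ] {ω' | A ω' = a} := fun a =>
    hA (measurableSet_singleton a)
  have hind_int : ∀ a : 𝒜, Integrable (ind a) P := fun a =>
    (integrable_const (1 : ℝ)).indicator (hAset a)
  have hfind_int : ∀ a : 𝒜, Integrable (fun ω => (g (H ω) a) ^ 2 * ind a ω) P := by
    intro a
    have hb : ∀ᵐ ω ∂P, ‖ind a ω‖ ≤ 1 := by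
      filter_upwards with ω
      by_cases h : ω ∈ {ω' | A ω' = a} <;>
        simp [hind_def, Set.indicator_of_mem, Set.indicator_of_notMem, h]
    exact ((hgint a).bdd_mul (c := 1) ((hind_int a).1) hb).congr
      (Filter.Eventually.of_forall fun ω => mul_comm _ _)
  have key : ∀ a : 𝒜, ε * ∫ ω, (g (H ω) a) ^ 2 ∂P ≤ ∫ ω, (g (H ω) a) ^ 2 * ind a ω ∂P := by
    intro a
    have hpull := condExp_mul_of_stronglyMeasurable_left (μ := P) (m := MeasurableSpace.comap H inferInstance) (hfm a)
      (by simpa [Pi.mul_def] using hfind_int a) (hind_int a)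
    have h1 : ∫ ω, (g (H ω) a) ^ 2 * ind a ω ∂P
        = ∫ ω, (g (H ω) a) ^ 2 * (P[ind a|MeasurableSpace.comap H inferInstance]) ω ∂P := by
      calc ∫ ω, (g (H ω) a) ^ 2 * ind a ω ∂P
          = ∫ ω, ((fun ω => (g (H ω) a) ^ 2) * ind a) ω ∂P := rfl
        _ = ∫ ω, (P[(fun ω => (g (H ω) a) ^ 2) * ind a|MeasurableSpace.comap H inferInstance]) ω ∂P :=
            (integral_condExp hm_le).symm
        _ = ∫ ω, (g (H ω) a) ^ 2 * (P[ind a|MeasurableSpace.comap H inferInstance]) ω ∂P := by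
            refine integral_congr_ae ?_
            filter_upwards [hpull] with ω hω
            simpa [Pi.mul_def] using hω
    rw [h1]
    have hint2 : Integrable (fun ω => (g (H ω) a) ^ 2 * (P[ind a|MeasurableSpace.comap H inferInstance]) ω) P := by
      refine (integrable_condExp (m := MeasurableSpace.comap H inferInstance)
        (f := (fun ω => (g (H ω) a) ^ 2) * ind a) (μ := P)).congr ?_
      filter_upwards [hpull] with ω hω
      simpa [Pi.mul_def] using hω
    have hmono : ∀ᵐ ω ∂P, ε * (g (H ω) a) ^ 2 ≤ (g (H ω) a) ^ 2 * (P[ind a|MeasurableSpace.comap H inferInstance]) ω := by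
      filter_upwards [hoverlap a] with ω hω
      calc ε * (g (H ω) a) ^ 2 = (g (H ω) a) ^ 2 * ε := mul_comm _ _
        _ ≤ (g (H ω) a) ^ 2 * (P[ind a|MeasurableSpace.comap H inferInstance]) ω :=
          mul_le_mul_of_nonneg_left hω (sq_nonneg _)
    calc ε * ∫ ω, (g (H ω) a) ^ 2 ∂P = ∫ ω, ε * (g (H ω) a) ^ 2 ∂P := by
          rw [integral_const_mul]
      _ ≤ _ := integral_mono_ae ((hgint a).const_mul ε) hint2 hmono
  -- sum of f a * ind a equals g(H,A)^2
  have hsum_eq : ∀ ω, (∑ a : 𝒜, (g (H ω) a) ^ 2 * ind a ω) = (g (H ω) (A ω)) ^ 2 := by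
    intro ω
    rw [Finset.sum_eq_single (A ω)]
    · simp [hind_def]
    · intro b _ hb
      have : ω ∉ {ω' | A ω' = b} := fun h => hb h.symm
      simp [hind_def, Set.indicator_of_notMem this]
    · simp
  have hsum : ε * ∑ a : 𝒜, ∫ ω, (g (H ω) a) ^ 2 ∂P ≤ ∫ ω, (g (H ω) (A ω)) ^ 2 ∂P := by
    have : ∫ ω, (g (H ω) (A ω)) ^ 2 ∂P = ∑ a : 𝒜, ∫ ω, (g (H ω) a) ^ 2 * ind a ω ∂P := by
      rw [← integral_finset_sum _ (fun a _ => hfind_int a)]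
      exact integral_congr_ae (.of_forall fun ω => (hsum_eq ω).symm)
    rw [this, Finset.mul_sum]
    exact Finset.sum_le_sum fun a _ => key a
  -- max ≤ sum
  have hmax : ∫ ω, (Finset.univ.sup' Finset.univ_nonempty fun a => (g (H ω) a) ^ 2) ∂P
      ≤ ∑ a : 𝒜, ∫ ω, (g (H ω) a) ^ 2 ∂P := by
    rw [← integral_finset_sum _ (fun a _ => hgint a)]
    refine integral_mono_of_nonneg ?_ (integrable_finset_sum _ fun a _ => hgint a) ?_
    · filter_upwards with ω
      obtain ⟨a, _, ha⟩ := Finset.exists_mem_eq_sup' (Finset.univ_nonempty (α := 𝒜))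
        (fun a => (g (H ω) a) ^ 2)
      rw [ha]; exact sq_nonneg _
    · filter_upwards with ω
      refine Finset.sup'_le _ _ fun a _ => ?_
      exact Finset.single_le_sum (fun b _ => sq_nonneg (g (H ω) b)) (Finset.mem_univ a)
  rw [div_mul_eq_mul_div, one_mul, le_div_iff₀ hε, mul_comm]
  exact le_trans (mul_le_mul_of_nonneg_left hmax hε.le) hsum
end
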